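/- arXiv:2603.18471 — 8 statements merged into one kernel-verified Lean document; each statement's English description precedes it below -/
import Mathlib

section
/- For every p-family S of subsets of a finite ground set E and every nonnegative integer q, there exists a subfamily Ŝ ⊆ S with |Ŝ| ≤ binom(p+q, p) such that Ŝ is q-representative for S. -/
/-!
A `q`-representative subfamily of `S` that is minimal under inclusion has, for every member `X`,
a set `Y_X` of size at most `q` that is disjoint from `X` and meets every other member: otherwise
`X` could be dropped. The pairs `(X, Y_X)` then form a Bollobás set-pair system, so
`∑ w(X, Y_X) ≤ 1` with `w(A, B) = 1 / binom(|A| + |B|, |A|)`, and each summand is at least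
`1 / binom(p + q, p)`.

Bollobás' inequality is proved by induction on the ground set `U`: deleting a point `x` from `U`,
from the sets `B i` and discarding the pairs with `x ∈ A i` leaves a set-pair system on `U \ {x}`,
and averaging the resulting inequalities over `x ∈ U` gives back the original one, because
`∑_{x ∈ U \ A} w(A, B \ {x}) = |U| w(A, B)`.
-/

/-- `S` is a `p`-family: every member has cardinality `p`. -/
def IsPFamily {α : Type*} (p : ℕ) (S : Finset (Finset α)) : Prop :=
  ∀ X ∈ S, X.card = p

/-- `Shat` is a `q`-representative subfamily of `S`. -/
def IsRepFor {α : Type*} (q : ℕ) (Shat S : Finset (Finset α)) : Prop :=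
  Shat ⊆ S ∧ ∀ Y : Finset α, Y.card ≤ q →
    (∃ X ∈ S, Disjoint X Y) → ∃ Xhat ∈ Shat, Disjoint Xhat Y

open Finset

section SetPairs

variable {α ι : Type*}

noncomputable def pairWeight (A B : Finset α) : ℚ := ((#A + #B).choose #A : ℚ)⁻¹

def IsSetPairSystem (I : Finset ι) (A B : ι → Finset α) : Prop :=
  (∀ i ∈ I, Disjoint (A i) (B i)) ∧ ∀ i ∈ I, ∀ j ∈ I, i ≠ j → ¬Disjoint (A i) (B j)

lemma pairWeight_le_one (A B : Finset α) : pairWeight A B ≤ 1 :=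
  inv_le_one_of_one_le₀ (Nat.one_le_cast.mpr (Nat.choose_pos (Nat.le_add_right _ _)))

lemma inv_choose_le_pairWeight {A B : Finset α} {p q : ℕ} (hA : #A = p) (hB : #B ≤ q) :
    ((p + q).choose p : ℚ)⁻¹ ≤ pairWeight A B := by
  rw [pairWeight, hA]
  exact inv_anti₀ (by exact_mod_cast Nat.choose_pos (Nat.le_add_right _ _))
    (by exact_mod_cast Nat.choose_le_choose p (by omega))

lemma card_mul_inv_choose_pred (a : ℕ) {b : ℕ} (hb : b ≠ 0) :
    (b : ℚ) * ((a + (b - 1)).choose a : ℚ)⁻¹ = (a + b) * ((a + b).choose a : ℚ)⁻¹ := by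
  obtain ⟨c, rfl⟩ := Nat.exists_eq_add_one_of_ne_zero hb
  have h : ((a + c).choose a : ℚ) * (a + c + 1) = (a + c + 1).choose a * (c + 1) := by
    have := Nat.choose_mul_succ_eq (a + c) a
    rw [show a + c + 1 - a = c + 1 by omega] at this
    exact_mod_cast this
  have hpos : 0 < (a + c).choose a := Nat.choose_pos (Nat.le_add_right _ _)
  have hpos' : 0 < (a + c + 1).choose a := Nat.choose_pos (by omega)
  rw [Nat.add_sub_cancel, ← add_assoc]
  field_simp
  push_cast
  linear_combination -h

lemma sum_sdiff_pairWeight_erase [DecidableEq α] {U A B : Finset α} (hA : A ⊆ U) (hB : B ⊆ U)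
    (hAB : Disjoint A B) (hBne : B.Nonempty) :
    ∑ x ∈ U \ A, pairWeight A (B.erase x) = #U * pairWeight A B := by
  have hBU : B ⊆ U \ A := subset_sdiff.mpr ⟨hB, hAB.symm⟩
  have hout : ∑ x ∈ (U \ A) \ B, pairWeight A (B.erase x) = #((U \ A) \ B) * pairWeight A B := by
    rw [sum_congr rfl fun x hx => by rw [erase_eq_of_notMem (mem_sdiff.mp hx).2], sum_const,
      nsmul_eq_mul]
  have hin : ∑ x ∈ B, pairWeight A (B.erase x) = (#A + #B) * pairWeight A B := by
    rw [sum_congr rfl fun x hx => by rw [pairWeight, card_erase_of_mem hx], sum_const,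
      nsmul_eq_mul, pairWeight, card_mul_inv_choose_pred _ hBne.card_pos.ne']
  have hcard : (#((U \ A) \ B) : ℚ) + #B + #A = #U := by
    exact_mod_cast (card_sdiff_add_card_eq_card hBU ▸ card_sdiff_add_card_eq_card hA :)
  rw [← sum_sdiff hBU, hout, hin, ← hcard]
  ring

namespace IsSetPairSystem

variable {I : Finset ι} {A B : ι → Finset α}

lemma eq_singleton_of_eq_empty (h : IsSetPairSystem I A B) {i : ι} (hi : i ∈ I)
    (hBi : B i = ∅) : I = {i} :=
  eq_singleton_iff_unique_mem.mpr
    ⟨hi, fun j hj => by_contra fun hne => h.2 j hj i hi hne (hBi ▸ disjoint_empty_right _)⟩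

lemma restrict [DecidableEq α] (h : IsSetPairSystem I A B) (x : α) :
    IsSetPairSystem (I.filter (x ∉ A ·)) A (fun i => (B i).erase x) := by
  refine ⟨fun i hi => disjoint_of_subset_right (erase_subset _ _) (h.1 i (mem_filter.mp hi).1),
    fun i hi j hj hne hdis => h.2 i (mem_filter.mp hi).1 j (mem_filter.mp hj).1 hne ?_⟩
  rwa [← disjoint_erase_comm, erase_eq_of_notMem (mem_filter.mp hi).2] at hdis

theorem sum_pairWeight_le_one_of_subset (h : IsSetPairSystem I A B) {U : Finset α}
    (hA : ∀ i ∈ I, A i ⊆ U) (hB : ∀ i ∈ I, B i ⊆ U) :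
    ∑ i ∈ I, pairWeight (A i) (B i) ≤ 1 := by
  classical
  induction U using Finset.strongInduction generalizing I B with
  | H U ih =>
  by_cases hBe : ∃ i ∈ I, B i = ∅
  · obtain ⟨i, hi, hBi⟩ := hBe
    rw [h.eq_singleton_of_eq_empty hi hBi, sum_singleton]
    exact pairWeight_le_one _ _
  push Not at hBe
  rcases I.eq_empty_or_nonempty with rfl | ⟨i₀, hi₀⟩
  · simp
  have hU : (0 : ℚ) < #U := by exact_mod_cast ((hBe i₀ hi₀).mono (hB i₀ hi₀)).card_pos
  have hdel : ∀ x ∈ U, ∑ i ∈ I.filter (x ∉ A ·), pairWeight (A i) ((B i).erase x) ≤ 1 :=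
    fun x hx => ih _ (erase_ssubset hx) (h.restrict x)
      (fun i hi => subset_erase.mpr ⟨hA i (mem_filter.mp hi).1, (mem_filter.mp hi).2⟩)
      (fun i hi => erase_subset_erase x (hB i (mem_filter.mp hi).1))
  refine le_of_mul_le_mul_left ?_ hU
  calc #U * ∑ i ∈ I, pairWeight (A i) (B i)
      = ∑ i ∈ I, ∑ x ∈ U \ A i, pairWeight (A i) ((B i).erase x) := by
        rw [mul_sum]
        exact sum_congr rfl fun i hi =>
          (sum_sdiff_pairWeight_erase (hA i hi) (hB i hi) (h.1 i hi) (hBe i hi)).symm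
    _ = ∑ x ∈ U, ∑ i ∈ I.filter (x ∉ A ·), pairWeight (A i) ((B i).erase x) :=
        sum_comm' fun i x => by simp only [mem_sdiff, mem_filter]; tauto
    _ ≤ ∑ _x ∈ U, 1 := sum_le_sum hdel
    _ = #U * 1 := by simp

theorem sum_pairWeight_le_one (h : IsSetPairSystem I A B) :
    ∑ i ∈ I, pairWeight (A i) (B i) ≤ 1 := by
  classical
  have hU : ∀ i ∈ I, A i ∪ B i ⊆ I.biUnion fun i => A i ∪ B i :=
    fun i hi => subset_biUnion_of_mem (fun i => A i ∪ B i) hi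
  exact h.sum_pairWeight_le_one_of_subset (fun i hi => subset_union_left.trans (hU i hi))
    (fun i hi => subset_union_right.trans (hU i hi))

end IsSetPairSystem

end SetPairs

section Representative

variable {α : Type*}

lemma isRepFor_self (q : ℕ) (S : Finset (Finset α)) : IsRepFor q S S :=
  ⟨subset_rfl, fun _ _ h => h⟩

lemma exists_disjoint_of_minimal_isRepFor {q : ℕ} {S Shat : Finset (Finset α)}
    (h : Minimal (IsRepFor q · S) Shat) {X : Finset α} (hX : X ∈ Shat) :
    ∃ Y : Finset α, #Y ≤ q ∧ Disjoint X Y ∧ ∀ X' ∈ Shat, X' ≠ X → ¬Disjoint X' Y := by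
  classical
  have hnot := h.not_prop_of_lt (erase_ssubset hX)
  simp only [IsRepFor, (erase_subset X Shat).trans h.prop.1, true_and, not_forall, not_exists,
    not_and, mem_erase] at hnot
  obtain ⟨Y, hYq, ⟨X₀, hX₀, hX₀Y⟩, hY⟩ := hnot
  obtain ⟨Xhat, hXhat, hXhatY⟩ := h.prop.2 Y hYq ⟨X₀, hX₀, hX₀Y⟩
  obtain rfl : Xhat = X := by_contra fun hne => hY Xhat ⟨hne, hXhat⟩ hXhatY
  exact ⟨Y, hYq, hXhatY, fun X' hX' hne => hY X' ⟨hne, hX'⟩⟩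

end Representative

theorem exists_small_rep_general {α : Type*} (p q : ℕ)
    (S : Finset (Finset α)) (hS : IsPFamily p S) :
    ∃ Shat : Finset (Finset α), Shat ⊆ S ∧ Shat.card ≤ (p + q).choose p ∧
      IsRepFor q Shat S := by
  obtain ⟨Shat, hmin⟩ := exists_minimal_of_wellFoundedLT (IsRepFor q · S) ⟨S, isRepFor_self q S⟩
  have hsub : Shat ⊆ S := hmin.prop.1
  choose! Y hYq hdisj hmeet using fun X (hX : X ∈ Shat) =>
    exists_disjoint_of_minimal_isRepFor hmin hX
  have hsys : IsSetPairSystem Shat id Y :=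
    ⟨hdisj, fun X hX X' hX' hne => hmeet X' hX' X hX hne⟩
  have hbound : #Shat • ((p + q).choose p : ℚ)⁻¹ ≤ 1 :=
    (card_nsmul_le_sum _ _ _ fun X hX =>
      inv_choose_le_pairWeight (hS X (hsub hX)) (hYq X hX)).trans hsys.sum_pairWeight_le_one
  have hpos : (0 : ℚ) < (p + q).choose p := by exact_mod_cast Nat.choose_pos (Nat.le_add_right p q)
  rw [nsmul_eq_mul, mul_inv_le_iff₀ hpos, one_mul] at hbound
  exact ⟨Shat, hsub, by exact_mod_cast hbound, hmin.prop⟩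

/-- Every `p`-family over a finite ground set has a `q`-representative subfamily of
size at most `binom(p+q, p)`. -/
theorem exists_small_rep {α : Type*} [Fintype α] [DecidableEq α] (p q : ℕ)
    (S : Finset (Finset α)) (hS : IsPFamily p S) :
    ∃ Shat : Finset (Finset α), Shat ⊆ S ∧ Shat.card ≤ (p + q).choose p ∧
      IsRepFor q Shat S :=
  exists_small_rep_general p q S hS
end

section
/- Let t be a positive integer and assume l_p < t and l_c < t. If there exists a feasible path-cycle packing of total length at least t, then there exists a feasible path-cycle packing D with t ≤ c(D) ≤ 2t and |V(D)| ≤ 2t. -/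
/-- An element of a path-cycle packing: a list of vertices together with a flag
telling whether it is a cycle (`true`) or a path (`false`). -/
structure PCElem (V : Type*) where
  verts : List V
  isCycle : Bool

/-- A valid element w.r.t. the arc relation `A`: the vertices are distinct,
consecutive vertices are joined by arcs, there are at least two vertices
(so paths have length ≥ 1 and cycles have length ≥ 2), and for a cycle the
last vertex is joined back to the first. -/
def ValidElem {V : Type*} (A : V → V → Prop) (e : PCElem V) : Prop :=
  e.verts.Nodup ∧ e.verts.Chain' A ∧ 2 ≤ e.verts.length ∧
    (e.isCycle = true → ∀ h : e.verts ≠ [], A (e.verts.getLast h) (e.verts.head h))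

/-- The length (number of arcs) of an element: a cycle on `k` vertices has length `k`,
a path on `k` vertices has length `k - 1`. -/
def elemLen {V : Type*} (e : PCElem V) : ℕ :=
  if e.isCycle then e.verts.length else e.verts.length - 1

/-- The vertex set of an element. -/
def elemVerts {V : Type*} [DecidableEq V] (e : PCElem V) : Finset V :=
  e.verts.toFinset

/-- A path-cycle packing: a finite set of valid, pairwise vertex-disjoint
paths and cycles. -/
def IsPacking {V : Type*} [DecidableEq V] (A : V → V → Prop)
    (D : Finset (PCElem V)) : Prop :=
  (∀ e ∈ D, ValidElem A e) ∧
    (D : Set (PCElem V)).Pairwise fun e f => Disjoint (elemVerts e) (elemVerts f)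

/-- `c(D)`: the total length of a packing. -/
def packLen {V : Type*} (D : Finset (PCElem V)) : ℕ :=
  ∑ e ∈ D, elemLen e

/-- `V(D)`: the set of vertices appearing in a packing. -/
def packVerts {V : Type*} [DecidableEq V] (D : Finset (PCElem V)) : Finset V :=
  D.biUnion elemVerts

/-- A feasible path: starts at an altruistic vertex of `B` and has length at most `lp`. -/
def FeasPath {V : Type*} (B : Set V) (lp : ℕ) (e : PCElem V) : Prop :=
  e.isCycle = false ∧ (∃ b ∈ B, e.verts.head? = some b) ∧ e.verts.length - 1 ≤ lp

/-- A feasible cycle: contains no vertex of `B` and has length at most `lc`. -/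
def FeasCycle {V : Type*} (B : Set V) (lc : ℕ) (e : PCElem V) : Prop :=
  e.isCycle = true ∧ (∀ w ∈ e.verts, w ∉ B) ∧ e.verts.length ≤ lc

/-- A feasible element: a feasible path or a feasible cycle. -/
def FeasElem {V : Type*} (B : Set V) (lp lc : ℕ) (e : PCElem V) : Prop :=
  FeasPath B lp e ∨ FeasCycle B lc e

/-- A feasible path-cycle packing. -/
def FeasPacking {V : Type*} [DecidableEq V] (A : V → V → Prop) (B : Set V)
    (lp lc : ℕ) (D : Finset (PCElem V)) : Prop :=
  IsPacking A D ∧ ∀ e ∈ D, FeasElem B lp lc e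

/-- If `l_p < t` and `l_c < t` and there is a feasible path-cycle packing of total
length at least `t`, then there is a feasible packing `D` with `t ≤ c(D) ≤ 2t`
which moreover covers at most `2t` vertices. -/
theorem exists_feasible_small_verts {V : Type*} [Fintype V] [DecidableEq V]
    (A : V → V → Prop) (B : Set V) (lp lc t : ℕ)
    (hloop : ∀ v, ¬ A v v) (hB : ∀ v u, A v u → u ∉ B)
    (ht : 0 < t) (hlp : lp < t) (hlc : lc < t)
    (hyes : ∃ D : Finset (PCElem V), FeasPacking A B lp lc D ∧ t ≤ packLen D) :
    ∃ D : Finset (PCElem V), FeasPacking A B lp lc D ∧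
      t ≤ packLen D ∧ packLen D ≤ 2 * t ∧ (packVerts D).card ≤ 2 * t := by
  classical
  obtain ⟨D, hD, htD⟩ := hyes
  -- the collection of sub-packings of total length at least t
  set P : Finset (Finset (PCElem V)) :=
    D.powerset.filter (fun S => t ≤ packLen S) with hP
  have hDP : D ∈ P := by
    simp [hP, htD]
  obtain ⟨S, hSP, hmin⟩ := P.exists_min_image packLen ⟨D, hDP⟩
  have hSD : S ⊆ D := by
    have := (Finset.mem_filter.1 hSP).1
    exact Finset.mem_powerset.1 this
  have htS : t ≤ packLen S := (Finset.mem_filter.1 hSP).2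
  -- S is a feasible packing
  have hFeasS : FeasPacking A B lp lc S := by
    refine ⟨⟨fun e he => hD.1.1 e (hSD he), hD.1.2.mono (by exact_mod_cast hSD)⟩,
      fun e he => hD.2 e (hSD he)⟩
  -- per-element length facts
  have hlen1 : ∀ e ∈ S, 1 ≤ elemLen e := by
    intro e he
    have h2 := (hD.1.1 e (hSD he)).2.2.1
    unfold elemLen
    split <;> omega
  have hlenle : ∀ e ∈ S, elemLen e + 1 ≤ t := by
    intro e he
    rcases hD.2 e (hSD he) with hp | hc
    · have : elemLen e = e.verts.length - 1 := by simp [elemLen, hp.1]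
      have := hp.2.2
      omega
    · have : elemLen e = e.verts.length := by simp [elemLen, hc.1]
      have := hc.2.2
      omega
  -- removing any element drops below t
  have herase : ∀ e ∈ S, packLen (S.erase e) + 1 ≤ t := by
    intro e he
    by_contra hcon
    push_neg at hcon
    have hmem : S.erase e ∈ P := by
      refine Finset.mem_filter.2 ⟨Finset.mem_powerset.2 ((S.erase_subset e).trans hSD), ?_⟩
      omega
    have hle := hmin _ hmem
    have hsum : elemLen e + packLen (S.erase e) = packLen S :=
      Finset.add_sum_erase S elemLen he
    have := hlen1 e he
    omega
  have hsplit : ∀ e ∈ S, packLen S = elemLen e + packLen (S.erase e) := by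
    intro e he
    exact (Finset.add_sum_erase S elemLen he).symm
  -- S nonempty
  have hSne : S.Nonempty := by
    rcases S.eq_empty_or_nonempty with h | h
    · exfalso; rw [h] at htS; simp [packLen] at htS; omega
    · exact h
  obtain ⟨e₀, he₀⟩ := hSne
  -- upper bound on packLen S
  have hupper : packLen S + 2 ≤ 2 * t := by
    have h1 := hlenle e₀ he₀
    have h2 := herase e₀ he₀
    have h3 := hsplit e₀ he₀
    omega
  -- lower bound on every element length: packLen S + 1 ≤ t + elemLen e
  have hlower : ∀ e ∈ S, packLen S + 1 ≤ t + elemLen e := by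
    intro e he
    have := herase e he
    have := hsplit e he
    omega
  -- vertex count
  have hcard : (packVerts S).card = ∑ e ∈ S, e.verts.length := by
    unfold packVerts
    rw [Finset.card_biUnion]
    · refine Finset.sum_congr rfl fun e he => ?_
      exact List.toFinset_card_of_nodup (hD.1.1 e (hSD he)).1
    · intro x hx y hy hxy
      exact hD.1.2 (hSD hx) (hSD hy) hxy
  have hvbound : (packVerts S).card ≤ packLen S + S.card := by
    rw [hcard]
    calc ∑ e ∈ S, e.verts.length ≤ ∑ e ∈ S, (elemLen e + 1) := by
          refine Finset.sum_le_sum fun e he => ?_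
          unfold elemLen
          split <;> omega
      _ = packLen S + S.card := by
          rw [Finset.sum_add_distrib, Finset.sum_const, smul_eq_mul, mul_one]
          rfl
  -- counting: k * (m + 1) ≤ k * t + m
  have hcount : S.card * (packLen S + 1) ≤ S.card * t + packLen S := by
    calc S.card * (packLen S + 1) = ∑ _e ∈ S, (packLen S + 1) := by
          rw [Finset.sum_const, smul_eq_mul]
      _ ≤ ∑ e ∈ S, (t + elemLen e) := Finset.sum_le_sum hlower
      _ = S.card * t + packLen S := by
          rw [Finset.sum_add_distrib, Finset.sum_const, smul_eq_mul]
          rfl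
  have hfinal : packLen S + S.card ≤ 2 * t := by
    nlinarith [hcount, hupper, htS]
  exact ⟨S, hFeasS, htS, by omega, le_trans hvbound hfinal⟩
end

section
/- Let t be a positive integer and assume l_p < t and l_c < t. Then there exists a feasible path-cycle packing of total length at least t if and only if there exists a tuple (k, v, u, l) with t ≤ k ≤ 2t and F_{k,l}^{vu} ≠ ∅ such that either (v ∈ B, u ∈ V∖B and l ≤ l_p) or (v = u ∈ V∖B and l ≤ l_c). -/
/-- A semi-feasible element: a feasible path, a feasible cycle, or a path of
length at most `lc` containing no vertex of `B`. -/
def SemiElem {V : Type*} (B : Set V) (lp lc : ℕ) (e : PCElem V) : Prop :=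
  FeasElem B lp lc e ∨
    (e.isCycle = false ∧ (∀ w ∈ e.verts, w ∉ B) ∧ e.verts.length - 1 ≤ lc)

/-- `e` is a `D_l^{vu}`: a path of length `l` from `v` to `u` when `v ≠ u`, and a
cycle of length `l` through `v` when `v = u`. -/
def IsDlvu {V : Type*} [DecidableEq V] (v u : V) (l : ℕ) (e : PCElem V) : Prop :=
  if v = u then
    e.isCycle = true ∧ v ∈ e.verts ∧ e.verts.length = l
  else
    e.isCycle = false ∧ e.verts.head? = some v ∧ e.verts.getLast? = some u ∧
      e.verts.length = l + 1

/-- `F_{k,l}^{vu}`: the collection of vertex sets `V(D)` over all semi-feasible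
packings `D = P ∪ C ∪ {D_l^{vu}}` with `c(D) = k`; the distinguished element
`D_l^{vu}` is semi-feasible and every other element is feasible. -/
def FF {V : Type*} [DecidableEq V] (A : V → V → Prop) (B : Set V) (lp lc : ℕ)
    (k l : ℕ) (v u : V) : Set (Finset V) :=
  { S | ∃ (D : Finset (PCElem V)) (e : PCElem V),
      IsPacking A D ∧ e ∈ D ∧ IsDlvu v u l e ∧ SemiElem B lp lc e ∧
      (∀ f ∈ D, f ≠ e → FeasElem B lp lc f) ∧ packLen D = k ∧ packVerts D = S }

/-- `F ⊎ T = { X ∪ T : X ∈ F, X ∩ T = ∅ }` for a collection of finite sets. -/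
def uplusS {V : Type*} [DecidableEq V] (F : Set (Finset V)) (T : Finset V) :
    Set (Finset V) :=
  { Z | ∃ X ∈ F, Disjoint X T ∧ Z = X ∪ T }

/- A feasible packing of total length at least `t` has a subpacking whose length lies in
`[t, 2t]`, because every element has length below `t`; any element of it, read as `D_l^{vu}`
(a path from its altruistic start to its last vertex, or a cycle through one of its vertices),
places the vertex set of the subpacking in some `F_{k,l}^{vu}`. Conversely, if `v ∈ B` or
`v = u`, the distinguished element of a packing in `F_{k,l}^{vu}` cannot be the extra kind of
semi-feasible element (a path avoiding `B`), so that packing is feasible. -/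

theorem Finset.exists_subset_sum_mem_Icc {α : Type*} (f : α → ℕ) {t : ℕ} {D : Finset α}
    (hf : ∀ e ∈ D, f e ≤ t) (h : t ≤ ∑ e ∈ D, f e) :
    ∃ D' ⊆ D, t ≤ ∑ e ∈ D', f e ∧ ∑ e ∈ D', f e ≤ 2 * t := by
  classical
  induction D using Finset.strongInduction with
  | H D ih =>
    by_cases hle : ∑ e ∈ D, f e ≤ 2 * t
    · exact ⟨D, subset_rfl, h, hle⟩
    obtain ⟨e, he⟩ := Finset.nonempty_of_sum_ne_zero (s := D) (f := f) (by omega)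
    have hsplit := Finset.add_sum_erase D f he
    obtain ⟨D', hD', hlo, hhi⟩ := ih _ (Finset.erase_ssubset he)
      (fun x hx => hf x (Finset.mem_of_mem_erase hx)) (by have := hf e he; omega)
    exact ⟨D', hD'.trans (Finset.erase_subset _ _), hlo, hhi⟩

section Packing

variable {V : Type*} {A : V → V → Prop} {B : Set V} {lp lc k l : ℕ} {v u : V} {e : PCElem V}

theorem FeasElem.elemLen_le_max (he : FeasElem B lp lc e) : elemLen e ≤ max lp lc := by
  rcases he with ⟨hc, -, hl⟩ | ⟨hc, -, hl⟩ <;>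
    simp only [elemLen, hc, Bool.false_eq_true, ↓reduceIte] <;> omega

theorem ValidElem.getLast_notMem (hB : ∀ v u, A v u → u ∉ B) (he : ValidElem A e)
    (hne : e.verts ≠ []) : e.verts.getLast hne ∉ B := by
  have hdrop : e.verts.dropLast ≠ [] := by
    rw [← List.length_pos_iff, List.length_dropLast]
    have := he.2.2.1
    omega
  exact hB _ _ (he.2.1.rel_getLast_dropLast hdrop)

variable [DecidableEq V] {D D' : Finset (PCElem V)}

theorem IsPacking.subset (hD : IsPacking A D) (h : D' ⊆ D) : IsPacking A D' :=
  ⟨fun e he => hD.1 e (h he), hD.2.mono (Finset.coe_subset.mpr h)⟩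

theorem FeasPacking.subset (hD : FeasPacking A B lp lc D) (h : D' ⊆ D) :
    FeasPacking A B lp lc D' :=
  ⟨hD.1.subset h, fun e he => hD.2 e (h he)⟩

theorem FeasElem.exists_isDlvu (hB : ∀ v u, A v u → u ∉ B) (hv : ValidElem A e)
    (hf : FeasElem B lp lc e) :
    ∃ l v u, IsDlvu v u l e ∧ ((v ∈ B ∧ u ∉ B ∧ l ≤ lp) ∨ (v = u ∧ u ∉ B ∧ l ≤ lc)) := by
  have hne : e.verts ≠ [] := List.ne_nil_of_length_pos (by have := hv.2.2.1; omega)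
  rcases hf with ⟨hc, ⟨b, hb, hhead⟩, hl⟩ | ⟨hc, hnB, hl⟩
  · have hlast := hv.getLast_notMem hB hne
    have hbl : b ≠ e.verts.getLast hne := fun h => hlast (h ▸ hb)
    refine ⟨_, b, _, ?_, .inl ⟨hb, hlast, hl⟩⟩
    rw [IsDlvu, if_neg hbl]
    exact ⟨hc, hhead, List.getLast?_eq_some_getLast hne, by have := hv.2.2.1; omega⟩
  · have hmem := List.head_mem hne
    refine ⟨_, _, _, ?_, .inr ⟨rfl, hnB _ hmem, hl⟩⟩
    rw [IsDlvu, if_pos rfl]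
    exact ⟨hc, hmem, rfl⟩

theorem FeasPacking.packVerts_mem_FF (hD : FeasPacking A B lp lc D) (he : e ∈ D)
    (hdl : IsDlvu v u l e) : packVerts D ∈ FF A B lp lc (packLen D) l v u :=
  ⟨D, e, hD.1, he, hdl, .inl (hD.2 e he), fun f hf _ => hD.2 f hf, rfl, rfl⟩

theorem SemiElem.feasElem_of_isDlvu (hs : SemiElem B lp lc e) (hdl : IsDlvu v u l e)
    (hvu : v ∈ B ∨ v = u) : FeasElem B lp lc e := by
  rcases hs with hf | ⟨hc, hnB, -⟩
  · exact hf
  by_cases h : v = u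
  · rw [IsDlvu, if_pos h, hc] at hdl
    exact absurd hdl.1 Bool.false_ne_true
  · rw [IsDlvu, if_neg h] at hdl
    exact absurd (hvu.resolve_right h) (hnB v (List.mem_of_mem_head? hdl.2.1))

theorem exists_feasPacking_of_mem_FF {S : Finset V} (hS : S ∈ FF A B lp lc k l v u)
    (hvu : v ∈ B ∨ v = u) : ∃ D, FeasPacking A B lp lc D ∧ packLen D = k := by
  obtain ⟨D, e, hD, he, hdl, hs, hothers, hlen, -⟩ := hS
  refine ⟨D, ⟨hD, fun f hf => ?_⟩, hlen⟩
  by_cases hfe : f = e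
  · exact hfe ▸ hs.feasElem_of_isDlvu hdl hvu
  · exact hothers f hf hfe

end Packing

theorem yes_iff_FF_nonempty_general {V : Type*} [DecidableEq V]
    (A : V → V → Prop) (B : Set V) (lp lc t : ℕ)
    (hB : ∀ v u, A v u → u ∉ B)
    (hlp : lp < t) (hlc : lc < t) :
    (∃ D : Finset (PCElem V), FeasPacking A B lp lc D ∧ t ≤ packLen D) ↔
      (∃ (k l : ℕ) (v u : V), t ≤ k ∧ k ≤ 2 * t ∧
        (FF A B lp lc k l v u).Nonempty ∧
        ((v ∈ B ∧ u ∉ B ∧ l ≤ lp) ∨ (v = u ∧ u ∉ B ∧ l ≤ lc))) := by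
  constructor
  · rintro ⟨D, hD, hlen⟩
    obtain ⟨D', hsub, hlo, hhi⟩ := Finset.exists_subset_sum_mem_Icc elemLen
      (fun e he => (hD.2 e he).elemLen_le_max.trans (by omega)) hlen
    have hD' := hD.subset hsub
    obtain ⟨e, he⟩ := Finset.nonempty_of_sum_ne_zero (s := D') (f := elemLen) (by omega)
    obtain ⟨l, v, u, hdl, hcond⟩ := (hD'.2 e he).exists_isDlvu hB (hD'.1.1 e he)
    exact ⟨packLen D', l, v, u, hlo, hhi, ⟨_, hD'.packVerts_mem_FF he hdl⟩, hcond⟩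
  · rintro ⟨k, l, v, u, hkt, -, ⟨S, hS⟩, hcond⟩
    obtain ⟨D, hD, rfl⟩ := exists_feasPacking_of_mem_FF hS (hcond.imp (·.1) (·.1))
    exact ⟨D, hD, hkt⟩

/-- (Lemma 4) With `l_p < t` and `l_c < t`, the instance is a yes-instance iff
there is a tuple `(k, v, u, l)` with `t ≤ k ≤ 2t` and `F_{k,l}^{vu} ≠ ∅` such that
either `v ∈ B`, `u ∉ B` and `l ≤ l_p`, or `v = u ∉ B` and `l ≤ l_c`. -/
theorem yes_iff_FF_nonempty {V : Type*} [Fintype V] [DecidableEq V]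
    (A : V → V → Prop) (B : Set V) (lp lc t : ℕ)
    (hloop : ∀ v, ¬ A v v) (hB : ∀ v u, A v u → u ∉ B)
    (ht : 0 < t) (hlp : lp < t) (hlc : lc < t) :
    (∃ D : Finset (PCElem V), FeasPacking A B lp lc D ∧ t ≤ packLen D) ↔
      (∃ (k l : ℕ) (v u : V), t ≤ k ∧ k ≤ 2 * t ∧
        (FF A B lp lc k l v u).Nonempty ∧
        ((v ∈ B ∧ u ∉ B ∧ l ≤ lp) ∨ (v = u ∧ u ∉ B ∧ l ≤ lc))) :=
  yes_iff_FF_nonempty_general A B lp lc t hB hlp hlc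
end

section
/- Let k ≥ l > 1 and let v ≠ u be vertices such that l ≤ l_p if v ∈ B and l ≤ l_c if v ∉ B. Then F_{k,l}^{vu} = ⋃_{w ∈ V, w ≠ v, (w,u) ∈ A} F_{k−1,l−1}^{vw} ⊎ {u}. -/
/-!
Deleting the last vertex `u` of the distinguished path `D_l^{vu}` of a packing counted in
`F_{k,l}^{vu}` leaves a path `D_{l-1}^{vw}`, where `(w, u)` is its last arc, and a packing
counted in `F_{k-1,l-1}^{vw}` whose vertex set misses `u`. Conversely, appending `u` to such a
path along an arc `(w, u)` gives a path again; it stays semi-feasible because `u ∉ B` (no arc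
enters `B`) and because of the bounds on `l`. The rest of the packing is untouched, so `V(D)`
changes by exactly `{u}` and `c(D)` by one.
-/

instance PCElem.instDecidableEq {V : Type*} [DecidableEq V] : DecidableEq (PCElem V) :=
  fun a b => decidable_of_iff (a.verts = b.verts ∧ a.isCycle = b.isCycle) <| by
    cases a; cases b; simp

section Packing

variable {V : Type*} [DecidableEq V] {A : V → V → Prop}

lemma ValidElem.elemVerts_nonempty {e : PCElem V} (he : ValidElem A e) :
    (elemVerts e).Nonempty := by
  obtain ⟨-, -, hlen, -⟩ := he
  exact List.toFinset_nonempty_iff _ |>.2 (List.ne_nil_of_length_pos (by omega))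

lemma isPacking_insert_iff {e : PCElem V} {D : Finset (PCElem V)} (he : e ∉ D) :
    IsPacking A (insert e D) ↔
      ValidElem A e ∧ IsPacking A D ∧ Disjoint (elemVerts e) (packVerts D) := by
  simp only [IsPacking, Finset.forall_mem_insert, Finset.coe_insert,
    Set.pairwise_insert_of_notMem (Finset.mem_coe.not.2 he), packVerts,
    Finset.disjoint_biUnion_right, Finset.mem_coe]
  constructor
  · rintro ⟨⟨hve, hvD⟩, hD, hdisj⟩
    exact ⟨hve, ⟨hvD, hD⟩, fun f hf => (hdisj f hf).1⟩
  · rintro ⟨hve, ⟨hvD, hD⟩, hdisj⟩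
    exact ⟨⟨hve, hvD⟩, hD, fun f hf => ⟨hdisj f hf, (hdisj f hf).symm⟩⟩

end Packing

lemma List.Nodup.head?_ne_getLast? {α : Type*} {xs : List α} {v w : α} (hd : xs.Nodup)
    (hlen : 2 ≤ xs.length) (hv : xs.head? = some v) (hw : xs.getLast? = some w) : v ≠ w := by
  match xs, hlen with
  | a :: b :: t, _ =>
    obtain rfl : a = v := by simpa using hv
    rw [List.getLast?_cons_cons] at hw
    rintro rfl
    exact (List.nodup_cons.1 hd).1 (List.mem_of_getLast? hw)

lemma semiElem_iff_of_head? {V : Type*} {B : Set V} {lp lc : ℕ} {e : PCElem V} {v : V}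
    (hc : e.isCycle = false) (hv : e.verts.head? = some v) :
    SemiElem B lp lc e ↔ (v ∈ B → e.verts.length - 1 ≤ lp) ∧
      (v ∉ B → (∀ x ∈ e.verts, x ∉ B) ∧ e.verts.length - 1 ≤ lc) := by
  have hmem : v ∈ e.verts := List.mem_of_mem_head? hv
  simp only [SemiElem, FeasElem, FeasPath, FeasCycle, hc, hv]
  by_cases hvB : v ∈ B <;> simp [hvB]
  exact fun h => absurd hvB (h v hmem)

namespace PCElem

variable {V : Type*} {p e : PCElem V} {v u : V}

def snoc (p : PCElem V) (u : V) : PCElem V :=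
  ⟨p.verts ++ [u], false⟩

lemma eq_snoc_dropLast (hc : e.isCycle = false) (hu : e.verts.getLast? = some u) :
    e = (⟨e.verts.dropLast, false⟩ : PCElem V).snoc u := by
  obtain ⟨xs, c⟩ := e
  obtain rfl : c = false := hc
  simp only [snoc, mk.injEq, and_true]
  exact (List.dropLast_append_getLast? u hu).symm

lemma head?_snoc (hv : p.verts.head? = some v) : (p.snoc u).verts.head? = some v := by
  simp [snoc, List.head?_append, hv]

end PCElem

section Snoc

open PCElem

variable {V : Type*} {p : PCElem V} {v w u : V}

lemma validElem_snoc_iff {A : V → V → Prop} (hc : p.isCycle = false)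
    (hlen : 2 ≤ p.verts.length) (hw : p.verts.getLast? = some w) :
    ValidElem A (p.snoc u) ↔ ValidElem A p ∧ u ∉ p.verts ∧ A w u := by
  simp only [ValidElem, snoc, hc, List.Chain', List.nodup_append, List.isChain_append, hw]
  simp only [List.length_append, List.length_singleton, hlen, show 2 ≤ p.verts.length + 1 by omega]
  aesop

variable {B : Set V} {lp lc : ℕ}

lemma SemiElem.of_snoc (hc : p.isCycle = false) (hv : p.verts.head? = some v)
    (h : SemiElem B lp lc (p.snoc u)) : SemiElem B lp lc p := by
  rw [semiElem_iff_of_head? rfl (head?_snoc hv)] at h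
  rw [semiElem_iff_of_head? hc hv]
  simp only [snoc, List.length_append, List.length_singleton, List.mem_append] at h
  refine ⟨fun hvB => (h.1 hvB).trans' (by omega), fun hvB => ⟨?_, (h.2 hvB).2.trans' (by omega)⟩⟩
  exact fun x hx => (h.2 hvB).1 x (Or.inl hx)

lemma SemiElem.snoc (hc : p.isCycle = false) (hv : p.verts.head? = some v)
    (h : SemiElem B lp lc p) (hu : u ∉ B) (hlp : v ∈ B → p.verts.length ≤ lp)
    (hlc : v ∉ B → p.verts.length ≤ lc) : SemiElem B lp lc (p.snoc u) := by
  rw [semiElem_iff_of_head? hc hv] at h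
  rw [semiElem_iff_of_head? rfl (head?_snoc hv)]
  simp only [PCElem.snoc, List.length_append, List.length_singleton, List.mem_append,
    List.mem_singleton, Nat.add_sub_cancel]
  refine ⟨hlp, fun hvB => ⟨?_, hlc hvB⟩⟩
  rintro x (hx | rfl)
  exacts [(h.2 hvB).1 x hx, hu]

end Snoc

section SnocVerts

open PCElem

variable {V : Type*} [DecidableEq V] {p e : PCElem V} {v w u : V}

lemma elemVerts_snoc : elemVerts (p.snoc u) = elemVerts p ∪ {u} := by
  simp [elemVerts, snoc, List.toFinset_append]

lemma disjoint_elemVerts_snoc_iff {X : Finset V} :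
    Disjoint (elemVerts (p.snoc u)) X ↔ Disjoint (elemVerts p) X ∧ u ∉ X := by
  rw [elemVerts_snoc, Finset.disjoint_union_left, Finset.disjoint_singleton_left]

lemma isDlvu_iff_of_ne {l : ℕ} (hvu : v ≠ u) :
    IsDlvu v u l e ↔ e.isCycle = false ∧ e.verts.head? = some v ∧
      e.verts.getLast? = some u ∧ e.verts.length = l + 1 := by
  rw [IsDlvu, if_neg hvu]

lemma elemLen_of_isDlvu {l : ℕ} (hvu : v ≠ u) (h : IsDlvu v u l e) : elemLen e = l := by
  rw [isDlvu_iff_of_ne hvu] at h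
  simp [elemLen, h.1, h.2.2.2]

lemma isDlvu_snoc_iff {m : ℕ} (hvu : v ≠ u) (hvw : v ≠ w) (hc : p.isCycle = false)
    (hw : p.verts.getLast? = some w) : IsDlvu v u (m + 1) (p.snoc u) ↔ IsDlvu v w m p := by
  have hne : p.verts ≠ [] := by rintro h; simp [h] at hw
  simp only [isDlvu_iff_of_ne hvu, isDlvu_iff_of_ne hvw, snoc, hc, hw, List.head?_append,
    List.getLast?_concat, List.length_append]
  simp [List.head?_eq_some_head hne]

end SnocVerts

/-- The distinguished element `D_l^{vu}` of a packing counted in `F_{k,l}^{vu}`. -/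
def IsSemiDlvu {V : Type*} [DecidableEq V] (A : V → V → Prop) (B : Set V) (lp lc : ℕ)
    (v u : V) (l : ℕ) (e : PCElem V) : Prop :=
  ValidElem A e ∧ IsDlvu v u l e ∧ SemiElem B lp lc e

section FF

variable {V : Type*} [DecidableEq V] {A : V → V → Prop} {B : Set V} {lp lc : ℕ}

lemma mem_FF_iff {k l : ℕ} {v u : V} {S : Finset V} :
    S ∈ FF A B lp lc k l v u ↔ ∃ (e : PCElem V) (R : Finset (PCElem V)),
      IsSemiDlvu A B lp lc v u l e ∧ FeasPacking A B lp lc R ∧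
      Disjoint (elemVerts e) (packVerts R) ∧ elemLen e + packLen R = k ∧
      elemVerts e ∪ packVerts R = S := by
  constructor
  · rintro ⟨D, e, hD, heD, hdl, hsemi, hfeas, rfl, rfl⟩
    rw [← Finset.insert_erase heD, isPacking_insert_iff (Finset.notMem_erase e D)] at hD
    obtain ⟨he, hR, hdisj⟩ := hD
    refine ⟨e, D.erase e, ⟨he, hdl, hsemi⟩, ⟨hR, fun f hf => ?_⟩, hdisj, ?_, ?_⟩
    · exact hfeas f (Finset.mem_of_mem_erase hf) (Finset.ne_of_mem_erase hf)
    · exact Finset.add_sum_erase D elemLen heD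
    · unfold packVerts
      rw [← Finset.biUnion_insert, Finset.insert_erase heD]
  · rintro ⟨e, R, ⟨he, hdl, hsemi⟩, ⟨hR, hfeas⟩, hdisj, rfl, rfl⟩
    have heR : e ∉ R := fun heR => he.elemVerts_nonempty.ne_empty <|
      Finset.disjoint_self_iff_empty _ |>.1 <|
        hdisj.mono_right (Finset.subset_biUnion_of_mem elemVerts heR)
    refine ⟨insert e R, e, (isPacking_insert_iff heR).2 ⟨he, hR, hdisj⟩,
      Finset.mem_insert_self e R, hdl, hsemi, fun f hf hfe => ?_, ?_, ?_⟩
    · exact hfeas f ((Finset.mem_insert.1 hf).resolve_left hfe)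
    · exact Finset.sum_insert heR
    · exact Finset.biUnion_insert

end FF

namespace IsSemiDlvu

open PCElem

variable {V : Type*} [DecidableEq V] {A : V → V → Prop} {B : Set V} {lp lc : ℕ}
  {p e : PCElem V} {v w u : V} {m : ℕ}

lemma exists_snoc (hvu : v ≠ u) (hm : 1 ≤ m) (he : IsSemiDlvu A B lp lc v u (m + 1) e) :
    ∃ w p, w ≠ v ∧ A w u ∧ u ∉ elemVerts p ∧ IsSemiDlvu A B lp lc v w m p ∧ e = p.snoc u := by
  obtain ⟨hval, hdl, hsemi⟩ := he
  obtain ⟨hc, hv, hu, hlen⟩ := (isDlvu_iff_of_ne hvu).1 hdl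
  set p : PCElem V := ⟨e.verts.dropLast, false⟩
  have he : e = p.snoc u := eq_snoc_dropLast hc hu
  have hplen : p.verts.length = m + 1 := by simp [p, hlen]
  have hpne : p.verts ≠ [] := List.ne_nil_of_length_pos (by omega)
  obtain ⟨w, hw⟩ : ∃ w, p.verts.getLast? = some w :=
    Option.isSome_iff_exists.1 (List.getLast?_isSome.2 hpne)
  have hpv : p.verts.head? = some v := by
    rwa [he, snoc, List.head?_append_of_ne_nil _ hpne] at hv
  rw [he] at hval hdl hsemi
  obtain ⟨hpval, hup, hwu⟩ := (validElem_snoc_iff rfl (by omega) hw).1 hval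
  have hvw : v ≠ w := hpval.1.head?_ne_getLast? (by omega) hpv hw
  exact ⟨w, p, hvw.symm, hwu, List.mem_toFinset.not.2 hup,
    ⟨hpval, (isDlvu_snoc_iff hvu hvw rfl hw).1 hdl, hsemi.of_snoc rfl hpv⟩, he⟩

lemma snoc (hvu : v ≠ u) (hwv : w ≠ v) (hwu : A w u) (hu : u ∉ B) (hup : u ∉ elemVerts p)
    (hlp : v ∈ B → m + 1 ≤ lp) (hlc : v ∉ B → m + 1 ≤ lc)
    (hp : IsSemiDlvu A B lp lc v w m p) : IsSemiDlvu A B lp lc v u (m + 1) (p.snoc u) := by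
  obtain ⟨hval, hdl, hsemi⟩ := hp
  obtain ⟨hc, hv, hw, hlen⟩ := (isDlvu_iff_of_ne hwv.symm).1 hdl
  refine ⟨(validElem_snoc_iff hc hval.2.2.1 hw).2 ⟨hval, List.mem_toFinset.not.1 hup, hwu⟩,
    (isDlvu_snoc_iff hvu hwv.symm hc hw).2 hdl, hsemi.snoc hc hv hu ?_ ?_⟩
  · exact hlen ▸ hlp
  · exact hlen ▸ hlc

end IsSemiDlvu

theorem FF_recurrence_extend_path_general {V : Type*} [DecidableEq V]
    (A : V → V → Prop) (B : Set V) (lp lc : ℕ)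
    (hB : ∀ v u, A v u → u ∉ B)
    (k l : ℕ) (v u : V) (hl : 1 < l) (hvu : v ≠ u)
    (h1 : v ∈ B → l ≤ lp) (h2 : v ∉ B → l ≤ lc) :
    FF A B lp lc k l v u =
      ⋃ (w : V) (_ : w ≠ v) (_ : A w u),
        uplusS (FF A B lp lc (k - 1) (l - 1) v w) {u} := by
  obtain ⟨m, rfl⟩ : ∃ m, l = m + 1 := ⟨l - 1, by omega⟩
  rw [Nat.add_sub_cancel]
  ext S
  simp only [Set.mem_iUnion, uplusS, mem_FF_iff]
  constructor
  · rintro ⟨e, R, he, hR, hdisj, hlen, rfl⟩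
    obtain ⟨w, p, hwv, hwu, hup, hp, rfl⟩ := he.exists_snoc hvu (by omega)
    rw [disjoint_elemVerts_snoc_iff] at hdisj
    rw [elemLen_of_isDlvu hvu he.2.1] at hlen
    refine ⟨w, hwv, hwu, _, ⟨p, R, hp, hR, hdisj.1, ?_, rfl⟩, ?_, ?_⟩
    · rw [elemLen_of_isDlvu hwv.symm hp.2.1]; omega
    · exact Finset.disjoint_singleton_right.2 (by simp [hup, hdisj.2])
    · rw [elemVerts_snoc, Finset.union_right_comm]
  · rintro ⟨w, hwv, hwu, _, ⟨p, R, hp, hR, hdisj, hlen, rfl⟩, hdu, rfl⟩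
    rw [Finset.disjoint_singleton_right, Finset.mem_union, not_or] at hdu
    rw [elemLen_of_isDlvu hwv.symm hp.2.1] at hlen
    have hps := hp.snoc hvu hwv hwu (hB w u hwu) hdu.1 h1 h2
    refine ⟨p.snoc u, R, hps, hR, disjoint_elemVerts_snoc_iff.2 ⟨hdisj, hdu.2⟩, ?_, ?_⟩
    · rw [elemLen_of_isDlvu hvu hps.2.1]; omega
    · rw [elemVerts_snoc, Finset.union_right_comm]

/-- (Case (iii) of the DP recurrence) For `k ≥ l > 1` and vertices `v ≠ u` with
`l ≤ l_p` if `v ∈ B` and `l ≤ l_c` if `v ∉ B`: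
`F_{k,l}^{vu} = ⋃_{w ≠ v, (w,u) ∈ A} F_{k-1,l-1}^{vw} ⊎ {u}`. -/
theorem FF_recurrence_extend_path {V : Type*} [Fintype V] [DecidableEq V]
    (A : V → V → Prop) (B : Set V) (lp lc : ℕ)
    (hloop : ∀ v, ¬ A v v) (hB : ∀ v u, A v u → u ∉ B)
    (k l : ℕ) (v u : V) (hkl : l ≤ k) (hl : 1 < l) (hvu : v ≠ u)
    (h1 : v ∈ B → l ≤ lp) (h2 : v ∉ B → l ≤ lc) :
    FF A B lp lc k l v u =
      ⋃ (w : V) (_ : w ≠ v) (_ : A w u),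
        uplusS (FF A B lp lc (k - 1) (l - 1) v w) {u} :=
  FF_recurrence_extend_path_general A B lp lc hB k l v u hl hvu h1 h2
end

section
/- Let E be a finite ground set, S a p-family of subsets of E, T ⊆ E a set of size r, and q a nonnegative integer. If Ŝ is (q+r)-representative for S, then the (p+r)-family Ŝ ⊎ T is q-representative for the (p+r)-family S ⊎ T. -/
/-- `F ⊎ T = { X ∪ T : X ∈ F, X ∩ T = ∅ }`. -/
def uplus {α : Type*} [DecidableEq α] (F : Finset (Finset α)) (T : Finset α) :
    Finset (Finset α) :=
  (F.filter fun X => Disjoint X T).image (· ∪ T)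

/-- If `Shat` is `(q+r)`-representative for the `p`-family `S` and `|T| = r`, then
the `(p+r)`-family `Shat ⊎ T` is `q`-representative for the `(p+r)`-family `S ⊎ T`. -/
theorem rep_uplus {α : Type*} [Fintype α] [DecidableEq α] (p q r : ℕ)
    (S Shat : Finset (Finset α)) (T : Finset α)
    (hS : IsPFamily p S) (hT : T.card = r)
    (hrep : IsRepFor (q + r) Shat S) :
    IsPFamily (p + r) (uplus S T) ∧ IsPFamily (p + r) (uplus Shat T) ∧
      IsRepFor q (uplus Shat T) (uplus S T) := by
  obtain ⟨hsub, hrep⟩ := hrep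
  have hcard : ∀ F : Finset (Finset α), (∀ X ∈ F, X.card = p) →
      IsPFamily (p + r) (uplus F T) := by
    intro F hF X hX
    simp only [uplus, Finset.mem_image, Finset.mem_filter] at hX
    obtain ⟨Z, ⟨hZ, hdisj⟩, rfl⟩ := hX
    rw [Finset.card_union_of_disjoint hdisj, hF Z hZ, hT]
  refine ⟨hcard S hS, hcard Shat (fun X hX => hS X (hsub hX)), ?_, ?_⟩
  · intro X hX
    simp only [uplus, Finset.mem_image, Finset.mem_filter] at hX ⊢
    obtain ⟨Z, ⟨hZ, hdisj⟩, rfl⟩ := hX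
    exact ⟨Z, ⟨hsub hZ, hdisj⟩, rfl⟩
  · intro Y hY ⟨X, hX, hXY⟩
    simp only [uplus, Finset.mem_image, Finset.mem_filter] at hX
    obtain ⟨Z, ⟨hZ, hdisjT⟩, rfl⟩ := hX
    rw [Finset.disjoint_union_left] at hXY
    obtain ⟨hZY, hTY⟩ := hXY
    have h1 : (Y ∪ T).card ≤ q + r := by
      calc (Y ∪ T).card ≤ Y.card + T.card := Finset.card_union_le _ _
        _ ≤ q + r := by omega
    obtain ⟨W, hW, hWd⟩ := hrep (Y ∪ T) h1 ⟨Z, hZ, by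
      rw [Finset.disjoint_union_right]; exact ⟨hZY, hdisjT⟩⟩
    rw [Finset.disjoint_union_right] at hWd
    refine ⟨W ∪ T, ?_, ?_⟩
    · simp only [uplus, Finset.mem_image, Finset.mem_filter]
      exact ⟨W, ⟨hW, hWd.2⟩, rfl⟩
    · rw [Finset.disjoint_union_left]
      exact ⟨hWd.1, hTY⟩
end

section
/- For all integers p ≥ 1 and q ≥ 1, it holds that s(p,q) ≤ e²·(p+1)·s(p+1,q−1), where s(p,q) = x(p,q)^{−p}·(1−x(p,q))^{−q} with x(p,q) = p/(p+2q) (in particular s(p+1,0) = 1). -/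
/-- `x(p,q) = p / (p + 2q)`. -/
noncomputable def xval (p q : ℕ) : ℝ := (p : ℝ) / ((p : ℝ) + 2 * (q : ℝ))

/-- `s(p,q) = x(p,q)^{-p} · (1 - x(p,q))^{-q}` (real powers; `0^0 = 1`,
so in particular `s(p,0) = 1` for `p ≥ 1`). -/
noncomputable def sval (p q : ℕ) : ℝ :=
  xval p q ^ (-(p : ℝ)) * (1 - xval p q) ^ (-(q : ℝ))

/-!
In closed form `s(p,q) = (p+2q)^(p+q) / (p^p (2q)^q)`. Passing from `(p,q)` to `(p+1,q-1)`
lowers the base `p+2q` by one, which costs at most a factor `e` because the exponent `p+q` does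
not exceed the base; trading `p^p` for `(p+1)^(p+1) / (p+1)` costs another factor `e`, since
`(1 + 1/p)^p ≤ e`; and `(2q)^q` only decreases.
-/

open Real

lemma sval_eq (p q : ℕ) :
    sval p q = ((p : ℝ) + 2 * q) ^ (p + q) / ((p : ℝ) ^ p * (2 * (q : ℝ)) ^ q) := by
  rcases Nat.eq_zero_or_pos (p + q) with h | h
  · obtain ⟨rfl, rfl⟩ : p = 0 ∧ q = 0 := by omega
    simp [sval]
  have hn : (0 : ℝ) < p + 2 * q := by
    have : (0 : ℝ) < p + q := by exact_mod_cast h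
    linarith [(q.cast_nonneg : (0 : ℝ) ≤ q)]
  have hx : 1 - xval p q = 2 * q / (p + 2 * q) := by
    unfold xval; field_simp; ring
  rw [sval, hx, xval, rpow_neg (by positivity), rpow_neg (by positivity), rpow_natCast,
    rpow_natCast, div_pow, div_pow, pow_add]
  field_simp

lemma sval_zero_right (p : ℕ) : sval p 0 = 1 := by
  have : (p : ℝ) ^ p ≠ 0 := by exact_mod_cast (Nat.pow_self_pos (n := p)).ne'
  simp [sval_eq, this]

lemma add_one_pow_le_exp_one_mul_pow {m k : ℕ} (hk : k ≤ m) :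
    ((m : ℝ) + 1) ^ k ≤ exp 1 * (m : ℝ) ^ k := by
  rcases Nat.eq_zero_or_pos m with rfl | hm
  · obtain rfl : k = 0 := by omega
    simp [one_le_exp zero_le_one]
  have hm' : (0 : ℝ) < m := by exact_mod_cast hm
  calc ((m : ℝ) + 1) ^ k = (1 + (m : ℝ)⁻¹) ^ k * (m : ℝ) ^ k := by
        rw [← mul_pow]; field_simp
    _ ≤ (1 + (m : ℝ)⁻¹) ^ m * (m : ℝ) ^ k := by
        gcongr
        exact le_add_of_nonneg_right (by positivity)
    _ ≤ exp 1 * (m : ℝ) ^ k := by gcongr; exact one_add_inv_pow_le_exp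

theorem sval_le_general (p q : ℕ) (hq : 1 ≤ q) :
    sval p q ≤ Real.exp 2 * ((p : ℝ) + 1) * sval (p + 1) (q - 1) ∧
      sval (p + 1) 0 = 1 := by
  refine ⟨?_, sval_zero_right _⟩
  obtain ⟨r, rfl⟩ : ∃ r, q = r + 1 := ⟨q - 1, by omega⟩
  have hbase : (p : ℝ) + 2 * ↑(r + 1) = ↑(p + 1 + 2 * r) + 1 := by push_cast; ring
  have hbase_pow := add_one_pow_le_exp_one_mul_pow (m := p + 1 + 2 * r) (k := p + (r + 1))
    (by omega)
  have hp_pow := add_one_pow_le_exp_one_mul_pow (le_refl p)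
  have hq_pow : (2 * (r : ℝ)) ^ r ≤ (2 * ((r + 1 : ℕ) : ℝ)) ^ (r + 1) :=
    calc (2 * (r : ℝ)) ^ r ≤ (2 * ((r + 1 : ℕ) : ℝ)) ^ r := by gcongr; simp
      _ ≤ (2 * ((r + 1 : ℕ) : ℝ)) ^ (r + 1) :=
        pow_le_pow_right₀ (by push_cast; linarith) r.le_succ
  have hq_pos : (0 : ℝ) < (2 * (r : ℝ)) ^ r := by
    rcases r with _ | r
    · simp
    · positivity
  rw [sval_eq, sval_eq, hbase, Nat.add_sub_cancel]
  calc _ ≤ exp 1 * (↑(p + 1 + 2 * r) : ℝ) ^ (p + (r + 1)) /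
        (((p : ℝ) + 1) ^ p / exp 1 * (2 * (r : ℝ)) ^ r) := by
        gcongr
        rw [div_le_iff₀ (exp_pos 1)]; linarith
    _ = _ := by
        rw [show exp 2 = exp 1 * exp 1 by rw [← exp_add]; norm_num]
        push_cast
        field_simp
        ring

/-- For all integers `p ≥ 1` and `q ≥ 1`,
`s(p,q) ≤ e² · (p+1) · s(p+1, q-1)`; moreover `s(p+1, 0) = 1`. -/
theorem sval_le (p q : ℕ) (hp : 1 ≤ p) (hq : 1 ≤ q) :
    sval p q ≤ Real.exp 2 * ((p : ℝ) + 1) * sval (p + 1) (q - 1) ∧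
      sval (p + 1) 0 = 1 :=
  sval_le_general p q hq
end

section
/- For every real number α with 0 < α < 2, ((4−α)/α)^α · ((4−α)/(4−2α))^{4−2α} < 6.855. -/
/-- Tangent-line type bound: for `x > 0`, `c > 0`, `t ≥ 0`,
`x ^ t ≤ c ^ t * exp (t * (x / c - 1))`. -/
lemma rpow_le_tangent (x c t : ℝ) (hx : 0 < x) (hc : 0 < c) (ht : 0 ≤ t) :
    x ^ t ≤ c ^ t * Real.exp (t * (x / c - 1)) := by
  have h1 : x ≤ c * Real.exp (x / c - 1) := by
    have := Real.add_one_le_exp (x / c - 1)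
    have h2 : x / c ≤ Real.exp (x / c - 1) := by linarith
    calc x = c * (x / c) := by field_simp
    _ ≤ c * Real.exp (x / c - 1) := by
        exact mul_le_mul_of_nonneg_left h2 hc.le
  calc x ^ t ≤ (c * Real.exp (x / c - 1)) ^ t :=
        Real.rpow_le_rpow hx.le h1 ht
  _ = c ^ t * (Real.exp (x / c - 1)) ^ t := Real.mul_rpow hc.le (Real.exp_pos _).le
  _ = c ^ t * Real.exp (t * (x / c - 1)) := by
        rw [← Real.exp_mul]; ring_nf

/-- For every real `α ∈ (0,2)`,
`((4-α)/α)^α · ((4-α)/(4-2α))^{4-2α} < 6.855` (real powers). -/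
theorem f_lt (α : ℝ) (h0 : 0 < α) (h2 : α < 2) :
    ((4 - α) / α) ^ α * ((4 - α) / (4 - 2 * α)) ^ (4 - 2 * α) < 6.855 := by
  obtain ⟨s, hsdef⟩ : ∃ s : ℝ, s = Real.sqrt 5 := ⟨_, rfl⟩
  have hs : s ^ 2 = 5 := by rw [hsdef]; exact Real.sq_sqrt (by norm_num)
  have hsnn : 0 ≤ s := by rw [hsdef]; exact Real.sqrt_nonneg 5
  have hs2 : (2:ℝ) < s := by nlinarith
  obtain ⟨φ, hφdef⟩ : ∃ φ : ℝ, φ = (1 + s) / 2 := ⟨_, rfl⟩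
  have hφpos : (0:ℝ) < φ := by rw [hφdef]; linarith
  have hφ2 : φ ^ 2 = φ + 1 := by rw [hφdef]; field_simp; nlinarith
  have hφ2pos : (0:ℝ) < φ ^ 2 := by positivity
  have h4a : (0:ℝ) < 4 - α := by linarith
  have h42a : (0:ℝ) < 4 - 2 * α := by linarith
  have hA : (0:ℝ) < (4 - α) / α := div_pos h4a h0
  have hB : (0:ℝ) < (4 - α) / (4 - 2 * α) := div_pos h4a h42a
  have key1 := rpow_le_tangent ((4 - α) / α) (φ ^ 2) α hA hφ2pos h0.le
  have key2 := rpow_le_tangent ((4 - α) / (4 - 2 * α)) φ (4 - 2 * α) hB hφpos h42a.le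
  -- the exponent terms sum to zero
  have hE : α * ((4 - α) / α / φ ^ 2 - 1) + (4 - 2 * α) * ((4 - α) / (4 - 2 * α) / φ - 1) = 0 := by
    have hαA : α * ((4 - α) / α / φ ^ 2) = (4 - α) / φ ^ 2 := by
      field_simp
    have hβB : (4 - 2 * α) * ((4 - α) / (4 - 2 * α) / φ) = (4 - α) / φ := by
      field_simp
    have hinv : (1:ℝ) / φ ^ 2 + 1 / φ = 1 := by
      rw [div_add_div _ _ (ne_of_gt hφ2pos) (ne_of_gt hφpos)]
      rw [div_eq_one_iff_eq (by positivity)]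
      nlinarith [hφ2]
    have hsum : (4 - α) / φ ^ 2 + (4 - α) / φ = 4 - α := by
      have h' : (4 - α) / φ ^ 2 + (4 - α) / φ = (4 - α) * (1 / φ ^ 2 + 1 / φ) := by ring
      rw [h', hinv, mul_one]
    nlinarith [hαA, hβB, hsum]
  have hφ4 : (φ ^ 2) ^ α * φ ^ (4 - 2 * α) *
      (Real.exp (α * ((4 - α) / α / φ ^ 2 - 1)) *
        Real.exp ((4 - 2 * α) * ((4 - α) / (4 - 2 * α) / φ - 1))) = φ ^ (4:ℕ) := by
    rw [← Real.exp_add, hE, Real.exp_zero, mul_one]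
    rw [← Real.rpow_natCast φ 2, ← Real.rpow_mul hφpos.le,
        ← Real.rpow_add hφpos, ← Real.rpow_natCast φ 4]
    norm_num
  have hbound : ((4 - α) / α) ^ α * ((4 - α) / (4 - 2 * α)) ^ (4 - 2 * α) ≤ φ ^ (4:ℕ) := by
    rw [← hφ4]
    have hp2 : (0:ℝ) ≤ (φ ^ 2) ^ α * Real.exp (α * ((4 - α) / α / φ ^ 2 - 1)) := by
      positivity
    calc ((4 - α) / α) ^ α * ((4 - α) / (4 - 2 * α)) ^ (4 - 2 * α)
        ≤ ((φ ^ 2) ^ α * Real.exp (α * ((4 - α) / α / φ ^ 2 - 1))) *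
          (φ ^ (4 - 2 * α) * Real.exp ((4 - 2 * α) * ((4 - α) / (4 - 2 * α) / φ - 1))) :=
          mul_le_mul key1 key2 (Real.rpow_pos_of_pos hB _).le hp2
    _ = (φ ^ 2) ^ α * φ ^ (4 - 2 * α) *
        (Real.exp (α * ((4 - α) / α / φ ^ 2 - 1)) *
          Real.exp ((4 - 2 * α) * ((4 - α) / (4 - 2 * α) / φ - 1))) := by ring
  have hfin : φ ^ (4:ℕ) < 6.855 := by
    have h4 : φ ^ (4:ℕ) = (φ ^ 2) ^ 2 := by ring
    rw [h4, hφ2, hφdef]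
    nlinarith [hs, hsnn]
  linarith
end

section
/- Let χ : V → S be a coloring of the vertices, let X ⊆ S be a set of colors with |X| ≥ 2 and |X| − 1 ≤ l_p, and let v ∈ V. Then there exists a feasible path P ending at v with |V(P)| = |X| and χ(V(P)) = X if and only if χ(v) ∈ X and there exists a vertex u with (u,v) ∈ A and a feasible path P' ending at u with |V(P')| = |X| − 1 and χ(V(P')) = X ∖ {χ(v)}. -/
/-!
A feasible path ending at `v` is exactly `P' ++ [v]` with `P'` a feasible path ending at an
in-neighbour of `v`, not containing `v`, of length at most `l_p`. On the colour side,
`P' ++ [v]` is coloured bijectively onto `X` iff `χ v ∈ X` and `P'` is coloured bijectively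
onto `X.erase (χ v)`: a colour repeated in `P' ++ [v]` would make its image smaller than `X`.
Conversely `v ∉ P'` because `χ v` misses the colours of `P'`, and `|P'| = |X| - 1 ≤ l_p`.
-/

/-- A feasible path (here single-vertex paths, of length `0`, are allowed):
a nonempty list of distinct vertices joined by arcs, starting at a vertex of `B`,
of length (number of arcs) at most `lp`. -/
def FeasPathL {V : Type*} (A : V → V → Prop) (B : Set V) (lp : ℕ)
    (P : List V) : Prop :=
  P ≠ [] ∧ P.Nodup ∧ P.Chain' A ∧ (∃ b ∈ B, P.head? = some b) ∧ P.length - 1 ≤ lp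

namespace Finset

variable {α β : Type*} [DecidableEq α] [DecidableEq β]

theorem image_insert_eq_and_card_eq_iff {s : Finset α} {a : α} (ha : a ∉ s) (f : α → β)
    (X : Finset β) :
    (insert a s).image f = X ∧ #(insert a s) = #X ↔
      f a ∈ X ∧ s.image f = X.erase (f a) ∧ #s = #X - 1 := by
  rw [card_insert_of_notMem ha, image_insert]
  constructor
  · rintro ⟨rfl, hcard⟩
    have hfa : f a ∉ s.image f := fun hmem => by
      have := card_image_le (s := s) (f := f)
      rw [insert_eq_self.mpr hmem] at hcard
      omega
    exact ⟨mem_insert_self _ _, (erase_insert hfa).symm, by omega⟩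
  · rintro ⟨hX, himg, hcard⟩
    have := card_pos.mpr ⟨_, hX⟩
    exact ⟨by rw [himg, insert_erase hX], by omega⟩

end Finset

namespace List

variable {α : Type*}

theorem toFinset_append_singleton [DecidableEq α] (l : List α) (a : α) :
    (l ++ [a]).toFinset = insert a l.toFinset := by
  ext; simp

theorem nodup_append_singleton {l : List α} {a : α} :
    (l ++ [a]).Nodup ↔ a ∉ l ∧ l.Nodup := by
  simpa using nodup_concat l a

end List

section FeasPathL

variable {V : Type*} {A : V → V → Prop} {B : Set V} {lp : ℕ}

theorem feasPathL_append_singleton_iff {Q : List V} (hQ : Q ≠ []) (v : V) :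
    FeasPathL A B lp (Q ++ [v]) ↔
      FeasPathL A B lp Q ∧ (∀ u ∈ Q.getLast?, A u v) ∧ v ∉ Q ∧ Q.length ≤ lp := by
  simp only [FeasPathL, List.Chain', List.nodup_append_singleton, List.isChain_append,
    List.head?_append_of_ne_nil _ hQ, List.length_append, List.length_singleton,
    Nat.add_sub_cancel, ne_eq, List.append_eq_nil_iff, hQ, List.cons_ne_self, and_self,
    not_false_eq_true, List.IsChain.singleton, Option.mem_def, List.head?_cons,
    Option.some.injEq, forall_eq', true_and, tsub_le_iff_right]
  grind

end FeasPathL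

theorem feasible_path_color_recurrence_general {V : Type*} {S : Type*}
    [DecidableEq V] [DecidableEq S]
    (A : V → V → Prop) (B : Set V) (lp : ℕ)
    (χ : V → S) (X : Finset S) (hX2 : 2 ≤ X.card) (hXlp : X.card - 1 ≤ lp)
    (v : V) :
    (∃ P : List V, FeasPathL A B lp P ∧ P.getLast? = some v ∧
        P.toFinset.card = X.card ∧ P.toFinset.image χ = X) ↔
      (χ v ∈ X ∧ ∃ u : V, A u v ∧ ∃ P' : List V, FeasPathL A B lp P' ∧
        P'.getLast? = some u ∧ P'.toFinset.card = X.card - 1 ∧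
        P'.toFinset.image χ = X.erase (χ v)) := by
  constructor
  · rintro ⟨P, hP, hlast, hcard, himg⟩
    obtain ⟨Q, rfl⟩ := List.getLast?_eq_some_iff.mp hlast
    have hvQ : v ∉ Q := (List.nodup_append_singleton.mp hP.2.1).1
    rw [List.toFinset_append_singleton] at hcard himg
    obtain ⟨hv, himgQ, hcardQ⟩ :=
      (Finset.image_insert_eq_and_card_eq_iff (List.mem_toFinset.not.mpr hvQ) χ X).mp
        ⟨himg, hcard⟩
    have hQ : Q ≠ [] := by
      rintro rfl
      simp at hcardQ
      omega
    obtain ⟨hQfeas, harc, -⟩ := (feasPathL_append_singleton_iff hQ v).mp hP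
    obtain ⟨u, hu⟩ := Option.isSome_iff_exists.mp (List.getLast?_isSome.mpr hQ)
    exact ⟨hv, u, harc u hu, Q, hQfeas, hu, hcardQ, himgQ⟩
  · rintro ⟨hv, u, huv, P', hP', hlast, hcard, himg⟩
    have hvP' : v ∉ P' := fun h => by
      simpa [himg] using Finset.mem_image_of_mem χ (List.mem_toFinset.mpr h)
    have hP'ne : P' ≠ [] := List.getLast?_isSome.mp (by simp [hlast])
    have hlen : P'.length ≤ lp := by
      rw [← List.toFinset_card_of_nodup hP'.2.1]
      omega
    refine ⟨P' ++ [v], (feasPathL_append_singleton_iff hP'ne v).mpr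
      ⟨hP', by simpa [hlast] using huv, hvP', hlen⟩, List.getLast?_concat, ?_⟩
    rw [List.toFinset_append_singleton]
    exact ((Finset.image_insert_eq_and_card_eq_iff (List.mem_toFinset.not.mpr hvP') χ X).mpr
      ⟨hv, himg, hcard⟩).symm

/-- (DP recurrence for color-coding) Let `χ : V → S` be a coloring, `X` a set of
colors with `|X| ≥ 2` and `|X| - 1 ≤ l_p`, and `v` a vertex. There is a feasible
path `P` ending at `v` with `|V(P)| = |X|` and `χ(V(P)) = X` iff `χ(v) ∈ X` and
there are an arc `(u,v) ∈ A` and a feasible path `P'` ending at `u` with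
`|V(P')| = |X| - 1` and `χ(V(P')) = X ∖ {χ(v)}`. -/
theorem feasible_path_color_recurrence {V : Type*} {S : Type*}
    [Fintype V] [DecidableEq V] [DecidableEq S]
    (A : V → V → Prop) (B : Set V) (lp : ℕ)
    (hloop : ∀ v, ¬ A v v) (hB : ∀ v u, A v u → u ∉ B)
    (χ : V → S) (X : Finset S) (hX2 : 2 ≤ X.card) (hXlp : X.card - 1 ≤ lp)
    (v : V) :
    (∃ P : List V, FeasPathL A B lp P ∧ P.getLast? = some v ∧
        P.toFinset.card = X.card ∧ P.toFinset.image χ = X) ↔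
      (χ v ∈ X ∧ ∃ u : V, A u v ∧ ∃ P' : List V, FeasPathL A B lp P' ∧
        P'.getLast? = some u ∧ P'.toFinset.card = X.card - 1 ∧
        P'.toFinset.image χ = X.erase (χ v)) :=
  feasible_path_color_recurrence_general A B lp χ X hX2 hXlp v
end
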